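/- Let π be a one-block factor code from a one-step SFT X to a sofic shift Y, and let (W, n, M) and (W', n', M) be triples such that (W, n, M) is a transition block, the blocks W_0…W_n and W'_0…W'_{n'} have the same first-position preimage set A and same position-n (resp. n') preimage set B with equal pairings, and the blocks W_n…W_t and W'_{n'}…W'_{t'} have the same endpoint preimage sets B, C with equal pairings. Then the depth of any transition block contained in W' at time n' with routing set M equals |M|; in particular, if (W, n, M) is a minimal transition block then so is (W', n', M). -/

import Mathlib

open List

/-- `U` is a (nonempty) block of the one-step SFT `X` determined by the
transition relation `TX`. -/
def IsXBlock {AX : Type*} (TX : AX → AX → Prop) (U : List AX) : Prop :=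
  U ≠ [] ∧ U.Chain' TX

/-- The set of `X`-blocks mapping (symbol-wise, via `πb`) to the word `W`. -/
def preim {AX AY : Type*} (TX : AX → AX → Prop) (πb : AX → AY) (W : List AY) :
    Set (List AX) :=
  {U | IsXBlock TX U ∧ U.map πb = W}

/-- `W` is a block of the sofic shift `Y = π(X)`. -/
def IsYBlock {AX AY : Type*} (TX : AX → AX → Prop) (πb : AX → AY) (W : List AY) : Prop :=
  (preim TX πb W).Nonempty

/-- `π_b^{-1}(W)_i`: the symbols occurring at position `i` in some preimage block of `W`. -/
def preimAt {AX AY : Type*} (TX : AX → AX → Prop) (πb : AX → AY) (W : List AY) (i : ℕ) :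
    Set AX :=
  {a | ∃ U ∈ preim TX πb W, U[i]? = some a}

/-- The `W`-pairing: the set of (first symbol, last symbol) pairs realized by
preimage blocks of `W`. -/
def pairing {AX AY : Type*} (TX : AX → AX → Prop) (πb : AX → AY) (W : List AY) :
    Set (AX × AX) :=
  {p | ∃ U ∈ preim TX πb W, U.head? = some p.1 ∧ U.getLast? = some p.2}

/-- `U ∈ π_b^{-1}(W)` is routable through `a` at time `n`. -/
def Routable {AX AY : Type*} (TX : AX → AX → Prop) (πb : AX → AY) (W : List AY) (n : ℕ)
    (a : AX) (U : List AX) : Prop :=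
  ∃ U' ∈ preim TX πb W, U'.head? = U.head? ∧ U'[n]? = some a ∧ U'.getLast? = U.getLast?

/-- `(W, n, M)` is a transition block. -/
def IsTransBlock {AX AY : Type*} (TX : AX → AX → Prop) (πb : AX → AY) (W : List AY)
    (n : ℕ) (M : Finset AX) : Prop :=
  IsYBlock TX πb W ∧ 0 < n ∧ n < W.length - 1 ∧
    (∀ a ∈ M, a ∈ preimAt TX πb W n) ∧
    ∀ U ∈ preim TX πb W, ∃ a ∈ M, Routable TX πb W n a U

/-!
A preimage `U` of `W` is routable through `a` at time `n` exactly when `(U₀, a)` lies in the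
pairing of `W₀ … Wₙ` and `(a, U_last)` in the pairing of `Wₙ … W_t`: cut a routing witness at
time `n`, and conversely glue two half preimages along their common symbol `a`, which is
allowed because `X` is a one-step SFT. Equal half pairings therefore make routability in
`(W, n)` and in `(W', n')` the same relation, so every preimage of `W'`, routed through its own
symbol at `n'`, has a counterpart preimage of `W`, whose routing through `M` carries back.
-/

section

variable {AX AY : Type*} {TX : AX → AX → Prop} {πb : AX → AY}

lemma length_eq_of_mem_preim {W : List AY} {U : List AX} (hU : U ∈ preim TX πb W) :
    U.length = W.length := by
  rw [← hU.2, length_map]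

lemma take_mem_preim {W : List AY} {U : List AX} (hU : U ∈ preim TX πb W) (k : ℕ) :
    U.take (k + 1) ∈ preim TX πb (W.take (k + 1)) := by
  obtain ⟨⟨hne, hch⟩, hmap⟩ := hU
  exact ⟨⟨by simpa using hne, hch.take _⟩, by rw [map_take, hmap]⟩

lemma drop_mem_preim {W : List AY} {U : List AX} (hU : U ∈ preim TX πb W) {k : ℕ}
    (hk : k < U.length) : U.drop k ∈ preim TX πb (W.drop k) := by
  obtain ⟨⟨-, hch⟩, hmap⟩ := hU
  refine ⟨⟨?_, hch.drop _⟩, by rw [map_drop, hmap]⟩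
  rw [ne_eq, drop_eq_nil_iff]
  omega

lemma mem_pairing_take_of_mem_preim {W : List AY} {U : List AX} (hU : U ∈ preim TX πb W)
    {k : ℕ} {x a : AX} (hx : U.head? = some x) (ha : U[k]? = some a) :
    (x, a) ∈ pairing TX πb (W.take (k + 1)) := by
  have hk : k < U.length := (List.getElem?_eq_some_iff.1 ha).1
  refine ⟨U.take (k + 1), take_mem_preim hU k, by simpa [head?_take] using hx, ?_⟩
  rw [getLast?_eq_getElem?, length_take, Nat.min_eq_left hk, Nat.succ_sub_one,
    getElem?_take_of_lt (Nat.lt_succ_self k), ha]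

lemma mem_pairing_drop_of_mem_preim {W : List AY} {U : List AX} (hU : U ∈ preim TX πb W)
    {k : ℕ} {a z : AX} (ha : U[k]? = some a) (hz : U.getLast? = some z) :
    (a, z) ∈ pairing TX πb (W.drop k) := by
  have hk : k < U.length := (List.getElem?_eq_some_iff.1 ha).1
  refine ⟨U.drop k, drop_mem_preim hU hk, by rwa [head?_drop], ?_⟩
  rw [← hz, getLast?_eq_getElem?, getLast?_eq_getElem?, length_drop, getElem?_drop]
  congr 1
  omega

lemma exists_mem_preim_of_mem_pairing {W : List AY} {n : ℕ} (hn : n < W.length)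
    {x m z : AX} (h₁ : (x, m) ∈ pairing TX πb (W.take (n + 1)))
    (h₂ : (m, z) ∈ pairing TX πb (W.drop n)) :
    ∃ V ∈ preim TX πb W, V.head? = some x ∧ V[n]? = some m ∧ V.getLast? = some z := by
  obtain ⟨V₁, ⟨⟨hne₁, hch₁⟩, hmap₁⟩, hx, hm⟩ := h₁
  obtain ⟨V₂, ⟨⟨-, hch₂⟩, hmap₂⟩, hm', hz⟩ := h₂
  have hlen₁ : V₁.length = n + 1 := by
    rw [length_eq_of_mem_preim ⟨⟨hne₁, hch₁⟩, hmap₁⟩, length_take]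
    omega
  obtain ⟨t, rfl⟩ : ∃ t, V₂ = m :: t := by
    cases V₂ with
    | nil => simp at hm'
    | cons b t => exact ⟨t, by simpa using hm'⟩
  have hmapt : t.map πb = W.drop (n + 1) := by
    simpa [tail_drop] using congrArg tail hmap₂
  refine ⟨V₁ ++ t, ⟨⟨by simp [hne₁], ?_⟩, ?_⟩, ?_, ?_, ?_⟩
  · refine hch₁.append hch₂.tail fun x hx y hy => ?_
    rw [hm, Option.mem_some_iff] at hx
    exact hx ▸ (isChain_cons.1 hch₂).1 y hy
  · rw [map_append, hmap₁, hmapt, take_append_drop]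
  · rwa [head?_append_of_ne_nil _ hne₁]
  · rw [getElem?_append_left (by omega), ← hm, getLast?_eq_getElem?, hlen₁, Nat.add_sub_cancel]
  · cases t with
    | nil => simpa [hm] using hz
    | cons c t => rwa [getLast?_append_of_ne_nil _ (cons_ne_nil c t)]

lemma routable_iff_mem_pairing {W : List AY} {n : ℕ} (hn : n < W.length) {a x z : AX}
    {U : List AX} (hx : U.head? = some x) (hz : U.getLast? = some z) :
    Routable TX πb W n a U ↔
      (x, a) ∈ pairing TX πb (W.take (n + 1)) ∧ (a, z) ∈ pairing TX πb (W.drop n) := by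
  rw [Routable, hx, hz]
  exact ⟨fun ⟨V, hV, hVx, hVa, hVz⟩ =>
      ⟨mem_pairing_take_of_mem_preim hV hVx hVa, mem_pairing_drop_of_mem_preim hV hVa hVz⟩,
    fun ⟨h₁, h₂⟩ => exists_mem_preim_of_mem_pairing hn h₁ h₂⟩

lemma routable_iff_of_pairing_eq {W W' : List AY} {n n' : ℕ} (hn : n < W.length)
    (hn' : n' < W'.length)
    (hP₁ : pairing TX πb (W.take (n + 1)) = pairing TX πb (W'.take (n' + 1)))
    (hP₂ : pairing TX πb (W.drop n) = pairing TX πb (W'.drop n')) {a : AX} {U : List AX}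
    (hU : U ≠ []) : Routable TX πb W n a U ↔ Routable TX πb W' n' a U := by
  rw [routable_iff_mem_pairing hn (head?_eq_some_head hU) (getLast?_eq_some_getLast hU),
    routable_iff_mem_pairing hn' (head?_eq_some_head hU) (getLast?_eq_some_getLast hU),
    hP₁, hP₂]

lemma Routable.of_head?_getLast?_eq {W : List AY} {n : ℕ} {a : AX} {U V : List AX}
    (hV : Routable TX πb W n a V) (h₀ : V.head? = U.head?) (hL : V.getLast? = U.getLast?) :
    Routable TX πb W n a U :=
  let ⟨V', hV', h₀', ha, hL'⟩ := hV
  ⟨V', hV', h₀'.trans h₀, ha, hL'.trans hL⟩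

end

theorem minimal_transBlock_transfer_general {AX AY : Type*}
    (TX : AX → AX → Prop) (πb : AX → AY)
    (W W' : List AY) (n n' : ℕ) (M : Finset AX)
    (hT : IsTransBlock TX πb W n M)
    (hW' : IsYBlock TX πb W')
    (hn'0 : 0 < n') (hn't : n' < W'.length - 1)
    (hmid : preimAt TX πb W' n' = preimAt TX πb W n)
    (hP1 : pairing TX πb (W.take (n + 1)) = pairing TX πb (W'.take (n' + 1)))
    (hP2 : pairing TX πb (W.drop n) = pairing TX πb (W'.drop n'))
    (hmin : ∀ (W'' : List AY) (n'' : ℕ) (M'' : Finset AX),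
      IsTransBlock TX πb W'' n'' M'' → M.card ≤ M''.card) :
    IsTransBlock TX πb W' n' M ∧
    ∀ (W'' : List AY) (n'' : ℕ) (M'' : Finset AX),
      IsTransBlock TX πb W'' n'' M'' → M.card ≤ M''.card := by
  obtain ⟨-, -, hnt, hM, hroute⟩ := hT
  have htransfer {a : AX} {U : List AX} (hU : U ≠ []) :
      Routable TX πb W n a U ↔ Routable TX πb W' n' a U :=
    routable_iff_of_pairing_eq (by omega) (by omega) hP1 hP2 hU
  refine ⟨⟨hW', hn'0, hn't, fun a ha => hmid ▸ hM a ha, fun U hU => ?_⟩, hmin⟩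
  obtain ⟨b, hb⟩ : ∃ b, U[n']? = some b :=
    ⟨_, getElem?_eq_getElem (by rw [length_eq_of_mem_preim hU]; omega)⟩
  -- `U` is trivially routable in `W'` through its own symbol `b`; move that to `W`.
  obtain ⟨V, hV, hVU₀, -, hVUL⟩ := (htransfer hU.1.1).2 ⟨U, hU, rfl, hb, rfl⟩
  obtain ⟨a, haM, hVa⟩ := hroute V hV
  exact ⟨a, haM, (htransfer hU.1.1).1 (hVa.of_head?_getLast?_eq hVU₀ hVUL)⟩

/-- Transfer of minimality: if `(W, n, M)` is a transition block, `W'` matches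
`W` in endpoint/midpoint preimage sets and half pairings, then `(W', n', M)` is
a transition block of depth `|M|`; in particular if `(W, n, M)` is a minimal
transition block then so is `(W', n', M)`. -/
theorem minimal_transBlock_transfer {AX AY : Type*}
    (TX : AX → AX → Prop) (πb : AX → AY)
    (W W' : List AY) (n n' : ℕ) (M : Finset AX)
    (hT : IsTransBlock TX πb W n M)
    (hW' : IsYBlock TX πb W')
    (hn'0 : 0 < n') (hn't : n' < W'.length - 1)
    (h0 : preimAt TX πb W' 0 = preimAt TX πb W 0)
    (hmid : preimAt TX πb W' n' = preimAt TX πb W n)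
    (hend : preimAt TX πb W' (W'.length - 1) = preimAt TX πb W (W.length - 1))
    (hP1 : pairing TX πb (W.take (n + 1)) = pairing TX πb (W'.take (n' + 1)))
    (hP2 : pairing TX πb (W.drop n) = pairing TX πb (W'.drop n'))
    (hmin : ∀ (W'' : List AY) (n'' : ℕ) (M'' : Finset AX),
      IsTransBlock TX πb W'' n'' M'' → M.card ≤ M''.card) :
    IsTransBlock TX πb W' n' M ∧
    ∀ (W'' : List AY) (n'' : ℕ) (M'' : Finset AX),
      IsTransBlock TX πb W'' n'' M'' → M.card ≤ M''.card :=
  minimal_transBlock_transfer_general TX πb W W' n n' M hT hW' hn'0 hn't hmid hP1 hP2 hmin
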